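/- arXiv:1907.04918 — 7 statements merged into one kernel-verified Lean document; each statement's English description precedes it below -/
import Mathlib

section
/- Let (X, ≼) be a preordered set and T, S : X → X. Define a relation ⊑ on the set V = {x ∈ X : T(x) ≼ S(x)} by v₁ ⊑ v₂ iff v₁ = v₂, or (v₁ ≺ v₂ and S(v₁) ≼ T(v₂)), where v₁ ≺ v₂ means v₁ ≼ v₂ and not v₂ ≼ v₁. Then ⊑ is a partial order on V (reflexive, antisymmetric, and transitive). -/
theorem eq_or_rel_trans {α : Type*} {r : α → α → Prop} {a b c : α}
    (hr : r a b → r b c → r a c) (hab : a = b ∨ r a b) (hbc : b = c ∨ r b c) :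
    a = c ∨ r a c := by
  rcases hab with rfl | hab
  · exact hbc
  rcases hbc with rfl | hbc
  · exact .inr hab
  · exact .inr (hr hab hbc)

theorem eq_of_eq_or_lt_and {X : Type*} [Preorder X] {p : X → X → Prop} {a b : X}
    (hab : a = b ∨ a < b ∧ p a b) (hba : b = a ∨ b < a ∧ p b a) : a = b := by
  rcases hab with hab | ⟨hab, -⟩
  · exact hab
  rcases hba with hba | ⟨hba, -⟩
  · exact hba.symm
  · exact absurd hba hab.not_gt

theorem lt_and_le_trans_of_le {X : Type*} [Preorder X] {T S : X → X} {a b c : X}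
    (hb : T b ≤ S b) (hab : a < b ∧ S a ≤ T b) (hbc : b < c ∧ S b ≤ T c) :
    a < c ∧ S a ≤ T c :=
  ⟨hab.1.trans hbc.1, hab.2.trans (hb.trans hbc.2)⟩

/-- The relation ⊑ defined by v₁ ⊑ v₂ iff v₁ = v₂ or (v₁ ≺ v₂ and S(v₁) ≼ T(v₂))
is a partial order on V = {x : T(x) ≼ S(x)}: reflexive, antisymmetric, transitive. -/
theorem stmt_5 {X : Type*} [Preorder X] (T S : X → X) :
    let sq : X → X → Prop := fun v₁ v₂ => v₁ = v₂ ∨ (v₁ < v₂ ∧ S v₁ ≤ T v₂)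
    (∀ v, T v ≤ S v → sq v v) ∧
      (∀ v₁ v₂, T v₁ ≤ S v₁ → T v₂ ≤ S v₂ → sq v₁ v₂ → sq v₂ v₁ → v₁ = v₂) ∧
      (∀ v₁ v₂ v₃, T v₁ ≤ S v₁ → T v₂ ≤ S v₂ → T v₃ ≤ S v₃ →
        sq v₁ v₂ → sq v₂ v₃ → sq v₁ v₃) :=
  ⟨fun _ _ => .inl rfl,
    fun _ _ _ _ => eq_of_eq_or_lt_and (p := fun a b => S a ≤ T b),
    fun _ _ _ _ hv₂ _ => eq_or_rel_trans (r := fun a b => a < b ∧ S a ≤ T b)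
      (lt_and_le_trans_of_le hv₂)⟩
end

section
/- Let (X, d, ≼) be a preordered s-regular b-metric space with coefficient s ≥ 1, and let T, S : X → X with T isotone. Suppose w ∈ X satisfies w ≼ T(w), and z ∈ X satisfies Sⁱ(z) ≼ S(w) ≼ T(w) for all i ∈ ℕ and d(Tⁱ(w), Sⁱ(z)) → 0 as i → ∞. Then T(w) = S(w). -/
/-! Since `T` is isotone and `w ≼ T w`, the orbit `Tⁱ w` increases, so for `i ≥ 1`
`Sⁱ z ≼ S w ≼ T w ≼ Tⁱ w`. Applying regularity twice to this chain bounds `d(S w, T w)` by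
`s⁴ · d(Sⁱ z, Tⁱ w)`, which tends to `0`. -/

section RegularChain

variable {X : Type*} [Preorder X] {d : X → X → ℝ} {s : ℝ}

theorem le_pow_four_mul_of_regular
    (hreg : ∀ x y z : X, x ≤ y → y ≤ z → max (d x y) (d y z) ≤ s ^ 2 * d x z)
    {a b c e : X} (hab : a ≤ b) (hbc : b ≤ c) (hce : c ≤ e) :
    d b c ≤ s ^ 4 * d a e :=
  calc d b c ≤ s ^ 2 * d a c := (le_max_right _ _).trans (hreg a b c hab hbc)
    _ ≤ s ^ 2 * (s ^ 2 * d a e) := by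
        gcongr
        exact (le_max_left _ _).trans (hreg a c e (hab.trans hbc) hce)
    _ = s ^ 4 * d a e := by ring

end RegularChain

theorem stmt_8_general {X : Type*} [Preorder X] (d : X → X → ℝ) (s : ℝ)
    (hd0 : ∀ x y, 0 ≤ d x y) (hdeq : ∀ x y, d x y = 0 ↔ x = y)
    (hdsymm : ∀ x y, d x y = d y x)
    (hreg : ∀ x y z : X, x ≤ y → y ≤ z → max (d x y) (d y z) ≤ s ^ 2 * d x z)
    (T S : X → X) (hT : ∀ x y, x ≤ y → T x ≤ T y)
    (w z : X) (hw : w ≤ T w)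
    (hz : ∀ i : ℕ, 1 ≤ i → S^[i] z ≤ S w) (hSw : S w ≤ T w)
    (hlim : Filter.Tendsto (fun i : ℕ => d (T^[i] w) (S^[i] z))
      Filter.atTop (nhds 0)) :
    T w = S w := by
  have horbit : Monotone (T^[·] w) := Monotone.monotone_iterate_of_le_map hT hw
  have hbound : ∀ i ≥ 1, d (S w) (T w) ≤ s ^ 4 * d (T^[i] w) (S^[i] z) := fun i hi => by
    rw [hdsymm (T^[i] w)]
    exact le_pow_four_mul_of_regular hreg (hz i hi) hSw (by simpa using horbit hi)
  have hle : d (S w) (T w) ≤ 0 :=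
    ge_of_tendsto (by simpa using hlim.const_mul (s ^ 4))
      (Filter.eventually_atTop.2 ⟨1, hbound⟩)
  exact ((hdeq _ _).1 (le_antisymm hle (hd0 _ _))).symm

/-- Limit step: in a preordered s-regular b-metric space, if T is isotone,
w ≼ T(w), Sⁱ(z) ≼ S(w) ≼ T(w) for all i ≥ 1 and d(Tⁱ(w),Sⁱ(z)) → 0,
then T(w) = S(w). -/
theorem stmt_8 {X : Type*} [Preorder X] (d : X → X → ℝ) (s : ℝ) (hs : 1 ≤ s)
    (hd0 : ∀ x y, 0 ≤ d x y) (hdeq : ∀ x y, d x y = 0 ↔ x = y)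
    (hdsymm : ∀ x y, d x y = d y x)
    (hdtri : ∀ x y z, d x y ≤ s * (d x z + d z y))
    (hreg : ∀ x y z : X, x ≤ y → y ≤ z → max (d x y) (d y z) ≤ s ^ 2 * d x z)
    (T S : X → X) (hT : ∀ x y, x ≤ y → T x ≤ T y)
    (w z : X) (hw : w ≤ T w)
    (hz : ∀ i : ℕ, 1 ≤ i → S^[i] z ≤ S w) (hSw : S w ≤ T w)
    (hlim : Filter.Tendsto (fun i : ℕ => d (T^[i] w) (S^[i] z))
      Filter.atTop (nhds 0)) :
    T w = S w :=
  stmt_8_general d s hd0 hdeq hdsymm hreg T S hT w z hw hz hSw hlim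
end

section
/- Theorem (coincidence points in preordered s-regular b-metric spaces): Let (X, d, ≼) be a preordered s-regular b-metric space, T, S : X → X, and x₀ ∈ X with T(x₀) ≼ S(x₀). Assume (i) T is isotone; (ii) S covers T on O_X(x₀) = {x : x ≼ x₀}; (iii) every chain C ∈ 𝒞(x₀, T, S, ≼) has a lower bound w ∈ X with w ≼ T(w), and there exists z ∈ X with Sⁱ(z) ≼ S(w) ≼ T(w) for all i ∈ ℕ and d(Tⁱ(w), Sⁱ(z)) → 0. Then Coin(T,S) ∩ O_X(x₀) is nonempty and contains a minimal element. -/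
/-!
By Zorn's lemma there is a maximal chain `C` of the family `𝒞(x₀, T, S, ≼)`; it is nonempty
because the covering hypothesis gives `x₁ ≼ x₀` with `S x₁ = T x₀`. Let `w` be the lower bound of
`C` provided by (iii). Both `S w` and `T w` lie between `Sⁱ z` and `Tⁱ w`, so `s`-regularity bounds
`d (S w) (T w)` by a constant multiple of `d (Tⁱ w) (Sⁱ z) → 0`, and `w` is a coincidence point.
A coincidence point `u ≼ x₀` below `C` can be added to `C`, so by maximality it belongs to `C`;
hence no such `u` lies strictly below `w`.
-/

open Filter Topology

section BMetric

variable {X : Type*} [Preorder X] {d : X → X → ℝ} {s : ℝ}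

theorem dist_le_of_le_of_le_of_le (hs : 0 ≤ s) (hdsymm : ∀ x y, d x y = d y x)
    (hdtri : ∀ x y z, d x y ≤ s * (d x z + d z y))
    (hreg : ∀ x y z : X, x ≤ y → y ≤ z → max (d x y) (d y z) ≤ s ^ 2 * d x z)
    {u a b v : X} (hua : u ≤ a) (hab : a ≤ b) (hbv : b ≤ v) :
    d a b ≤ 2 * s ^ 3 * d v u := by
  have hav : d a v ≤ s ^ 2 * d u v := (le_max_right _ _).trans (hreg u a v hua (hab.trans hbv))
  have hbv' : d b v ≤ s ^ 2 * d u v := (le_max_right _ _).trans (hreg u b v (hua.trans hab) hbv)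
  calc d a b ≤ s * (d a v + d v b) := hdtri a b v
    _ = s * (d a v + d b v) := by rw [hdsymm v b]
    _ ≤ s * (s ^ 2 * d u v + s ^ 2 * d u v) := by gcongr
    _ = 2 * s ^ 3 * d v u := by rw [hdsymm u v]; ring

theorem eq_of_tendsto_dist_of_le_of_le (hs : 0 ≤ s) (hd0 : ∀ x y, 0 ≤ d x y)
    (hdeq : ∀ x y, d x y = 0 ↔ x = y) (hdsymm : ∀ x y, d x y = d y x)
    (hdtri : ∀ x y z, d x y ≤ s * (d x z + d z y))
    (hreg : ∀ x y z : X, x ≤ y → y ≤ z → max (d x y) (d y z) ≤ s ^ 2 * d x z)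
    {a b : X} {u v : ℕ → X} (hab : a ≤ b) (hua : ∀ᶠ i in atTop, u i ≤ a)
    (hbv : ∀ᶠ i in atTop, b ≤ v i) (htend : Tendsto (fun i => d (v i) (u i)) atTop (𝓝 0)) :
    a = b := by
  have hbound : ∀ᶠ i in atTop, d a b ≤ 2 * s ^ 3 * d (v i) (u i) := by
    filter_upwards [hua, hbv] with i hi hi'
    exact dist_le_of_le_of_le_of_le hs hdsymm hdtri hreg hi hab hi'
  have hle : d a b ≤ 0 := by
    simpa using ge_of_tendsto (htend.const_mul (2 * s ^ 3)) hbound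
  exact (hdeq a b).1 (le_antisymm hle (hd0 a b))

end BMetric

section AdmissibleChain

variable {X : Type*} [Preorder X] {T S : X → X} {x₀ : X}

/-- Membership in the family `𝒞(x₀, T, S, ≼)`. -/
structure IsAdmissibleChain (T S : X → X) (x₀ : X) (C : Set X) : Prop where
  isChain : IsChain (· ≤ ·) C
  subset_Iic : C ⊆ Set.Iic x₀
  map_le : ∀ x ∈ C, T x ≤ S x
  map_le_map_of_lt : ∀ x ∈ C, ∀ y ∈ C, x < y → S x ≤ T y
  image_subset : S '' C ⊆ T '' Set.Iic x₀

theorem isAdmissibleChain_singleton (hT : Monotone T) {x₁ : X} (hx₁ : x₁ ≤ x₀)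
    (hSx₁ : S x₁ = T x₀) : IsAdmissibleChain T S x₀ {x₁} where
  isChain := Set.subsingleton_singleton.isChain
  subset_Iic := by simpa using hx₁
  map_le := by simpa [hSx₁] using hT hx₁
  map_le_map_of_lt := by simp
  image_subset := by
    rw [Set.image_singleton, hSx₁]
    exact Set.singleton_subset_iff.2 ⟨x₀, le_rfl, rfl⟩

theorem Set.exists_mem_of_mem_sUnion_of_isChain {α : Type*} {c : Set (Set α)}
    (hc : IsChain (· ⊆ ·) c) {x y : α} (hx : x ∈ ⋃₀ c) (hy : y ∈ ⋃₀ c) :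
    ∃ A ∈ c, x ∈ A ∧ y ∈ A := by
  obtain ⟨A, hA, hxA⟩ := hx
  obtain ⟨B, hB, hyB⟩ := hy
  obtain ⟨D, hD, hAD, hBD⟩ := hc.directedOn A hA B hB
  exact ⟨D, hD, hAD hxA, hBD hyB⟩

theorem IsAdmissibleChain.sUnion {c : Set (Set X)} (hc : IsChain (· ⊆ ·) c)
    (hadm : ∀ C ∈ c, IsAdmissibleChain T S x₀ C) : IsAdmissibleChain T S x₀ (⋃₀ c) where
  isChain x hx y hy hxy := by
    obtain ⟨A, hA, hxA, hyA⟩ := Set.exists_mem_of_mem_sUnion_of_isChain hc hx hy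
    exact (hadm A hA).isChain hxA hyA hxy
  subset_Iic := Set.sUnion_subset fun A hA => (hadm A hA).subset_Iic
  map_le x := fun ⟨A, hA, hxA⟩ => (hadm A hA).map_le x hxA
  map_le_map_of_lt x hx y hy := by
    obtain ⟨A, hA, hxA, hyA⟩ := Set.exists_mem_of_mem_sUnion_of_isChain hc hx hy
    exact (hadm A hA).map_le_map_of_lt x hxA y hyA
  image_subset := by
    rintro _ ⟨x, ⟨A, hA, hxA⟩, rfl⟩
    exact (hadm A hA).image_subset ⟨x, hxA, rfl⟩

theorem IsAdmissibleChain.insert {C : Set X} (hC : IsAdmissibleChain T S x₀ C) (hT : Monotone T)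
    {u : X} (hu : T u = S u) (hux₀ : u ≤ x₀) (hlb : ∀ x ∈ C, u ≤ x) :
    IsAdmissibleChain T S x₀ (insert u C) where
  isChain := hC.isChain.insert fun x hx _ => Or.inl (hlb x hx)
  subset_Iic := Set.insert_subset hux₀ hC.subset_Iic
  map_le := Set.forall_mem_insert.2 ⟨hu.le, hC.map_le⟩
  map_le_map_of_lt := by
    rintro x (rfl | hx) y (rfl | hy) hxy
    · exact absurd hxy (lt_irrefl _)
    · exact hu ▸ hT (hlb y hy)
    · exact absurd (hxy.trans_le (hlb x hx)) (lt_irrefl _)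
    · exact hC.map_le_map_of_lt x hx y hy hxy
  image_subset := by
    rw [Set.image_insert_eq]
    exact Set.insert_subset ⟨u, hux₀, hu⟩ hC.image_subset

theorem exists_maximal_isAdmissibleChain (hT : Monotone T) (h0 : T x₀ ≤ S x₀)
    (hcov : ∀ x, x ≤ x₀ → T x ≤ S x → ∃ y, y ≤ x ∧ S y = T x) :
    ∃ C, Maximal (IsAdmissibleChain T S x₀) C ∧ C.Nonempty := by
  obtain ⟨x₁, hx₁, hSx₁⟩ := hcov x₀ le_rfl h0
  obtain ⟨C, hx₁C, hC⟩ := zorn_subset_nonempty {C | IsAdmissibleChain T S x₀ C}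
    (fun c hc hchain _ => ⟨⋃₀ c, IsAdmissibleChain.sUnion hchain hc,
      fun _ => Set.subset_sUnion_of_mem⟩)
    {x₁} (isAdmissibleChain_singleton hT hx₁ hSx₁)
  exact ⟨C, hC, x₁, hx₁C rfl⟩

theorem Maximal.mem_of_coincidence_of_forall_le {C : Set X}
    (hC : Maximal (IsAdmissibleChain T S x₀) C) (hT : Monotone T) {u : X} (hu : T u = S u)
    (hux₀ : u ≤ x₀) (hlb : ∀ x ∈ C, u ≤ x) : u ∈ C :=
  hC.eq_of_subset (hC.prop.insert hT hu hux₀ hlb) (Set.subset_insert u C) ▸ Set.mem_insert u C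

end AdmissibleChain

/-- Coincidence theorem in preordered s-regular b-metric spaces:
Coin(T,S) ∩ O_X(x₀) is nonempty and contains a minimal element. -/
theorem stmt_10 {X : Type*} [Preorder X] (d : X → X → ℝ) (s : ℝ) (hs : 1 ≤ s)
    (hd0 : ∀ x y, 0 ≤ d x y) (hdeq : ∀ x y, d x y = 0 ↔ x = y)
    (hdsymm : ∀ x y, d x y = d y x)
    (hdtri : ∀ x y z, d x y ≤ s * (d x z + d z y))
    (hreg : ∀ x y z : X, x ≤ y → y ≤ z → max (d x y) (d y z) ≤ s ^ 2 * d x z)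
    (T S : X → X) (x₀ : X) (h0 : T x₀ ≤ S x₀)
    (hT : ∀ x y, x ≤ y → T x ≤ T y)
    (hcov : ∀ x, x ≤ x₀ → T x ≤ S x → ∃ y, y ≤ x ∧ S y = T x)
    (hchain : ∀ C : Set X, IsChain (· ≤ ·) C → C ⊆ {x | x ≤ x₀} →
      (∀ x ∈ C, T x ≤ S x) → (∀ x ∈ C, ∀ y ∈ C, x < y → S x ≤ T y) →
      S '' C ⊆ T '' {x | x ≤ x₀} →
      ∃ w, (∀ x ∈ C, w ≤ x) ∧ w ≤ T w ∧
        ∃ z, (∀ i : ℕ, 1 ≤ i → S^[i] z ≤ S w) ∧ S w ≤ T w ∧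
          Filter.Tendsto (fun i : ℕ => d (T^[i] w) (S^[i] z))
            Filter.atTop (nhds 0)) :
    ∃ w, T w = S w ∧ w ≤ x₀ ∧
      ∀ u, T u = S u → u ≤ x₀ → ¬ u < w := by
  have hTmono : Monotone T := fun x y => hT x y
  obtain ⟨C, hCmax, x₁, hx₁C⟩ := exists_maximal_isAdmissibleChain hTmono h0 hcov
  have hC := hCmax.prop
  obtain ⟨w, hwC, hwTw, z, hSz, hSwTw, htend⟩ := hchain C hC.isChain hC.subset_Iic hC.map_le
    hC.map_le_map_of_lt hC.image_subset
  have hTw : ∀ᶠ i in atTop, T w ≤ T^[i] w := by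
    filter_upwards [eventually_ge_atTop 1] with i hi
    exact hTmono.monotone_iterate_of_le_map hwTw hi
  have hcoin : S w = T w := eq_of_tendsto_dist_of_le_of_le (zero_le_one.trans hs) hd0 hdeq
    hdsymm hdtri hreg hSwTw ((eventually_ge_atTop 1).mono hSz) hTw htend
  refine ⟨w, hcoin.symm, (hwC x₁ hx₁C).trans (hC.subset_Iic hx₁C), fun u hu hux₀ huw => ?_⟩
  exact huw.not_ge (hwC u (hCmax.mem_of_coincidence_of_forall_le hTmono hu hux₀
    fun x hx => huw.le.trans (hwC x hx)))
end

section
/- Dual coincidence theorem: Let (X, d, ≼) be a preordered s-regular b-metric space, T, S : X → X, and x₀ ∈ X with S(x₀) ≼ T(x₀). Assume T is isotone, S covers T from above on O_X*(x₀) = {x : x₀ ≼ x}, and every chain C ∈ 𝒞*(x₀, T, S, ≼) has an upper bound w with T(w) ≼ w, and there exists z ∈ X with T(w) ≼ S(w) ≼ Sⁱ(z) for all i ∈ ℕ and d(Tⁱ(w), Sⁱ(z)) → 0. Then Coin(T,S) ∩ O_X*(x₀) is nonempty and contains a maximal element. -/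
/-!
A maximal element of `Coin(T, S) ∩ O*(x₀)` comes from Zorn's lemma once every chain of
coincidence points above `x₀` has an upper bound of the same kind. The chain hypothesis
supplies an upper bound `w`, and `w` is itself a coincidence point: isotonicity and `T w ≤ w`
give `Tⁱ⁺¹ w ≤ T w ≤ S w ≤ Sⁱ⁺¹ z`, so `s`-regularity bounds `d (T w) (Sⁱ⁺¹ z)` by
`s² · d (Tⁱ⁺¹ w) (Sⁱ⁺¹ z) → 0`, and then `d (T w) (S w)` by `s² · d (T w) (Sⁱ⁺¹ z) → 0`.
Nonemptiness of the family comes from the singleton chain `{y₀}`, where `S y₀ = T x₀`.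
-/

open Filter Topology

lemma tendsto_zero_of_le_const_mul {ι : Type*} {l : Filter ι} {a b : ι → ℝ} {c : ℝ}
    (ha : ∀ i, 0 ≤ a i) (hab : ∀ i, a i ≤ c * b i) (hb : Tendsto b l (𝓝 0)) :
    Tendsto a l (𝓝 0) :=
  squeeze_zero ha hab (by simpa using hb.const_mul c)

theorem eq_of_tendsto_dist_iterate {X : Type*} [Preorder X] {d : X → X → ℝ} {c : ℝ}
    (hd0 : ∀ x y, 0 ≤ d x y) (hdeq : ∀ x y, d x y = 0 ↔ x = y)
    (hreg : ∀ x y z, x ≤ y → y ≤ z → max (d x y) (d y z) ≤ c * d x z)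
    {T S : X → X} (hT : Monotone T) {w z : X} (hTw : T w ≤ w) (hTS : T w ≤ S w)
    (hSz : ∀ i : ℕ, 1 ≤ i → S w ≤ S^[i] z)
    (hlim : Tendsto (fun i : ℕ => d (T^[i] w) (S^[i] z)) atTop (𝓝 0)) :
    T w = S w := by
  have hTi : ∀ n : ℕ, T^[n + 1] w ≤ T w := fun n =>
    hT.antitone_iterate_of_map_le hTw (Nat.le_add_left 1 n)
  have hSi : ∀ n : ℕ, S w ≤ S^[n + 1] z := fun n => hSz (n + 1) (Nat.le_add_left 1 n)
  have hnear : Tendsto (fun n : ℕ => d (T w) (S^[n + 1] z)) atTop (𝓝 0) :=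
    tendsto_zero_of_le_const_mul (fun _ => hd0 _ _)
      (fun n => (le_max_right _ _).trans (hreg _ _ _ (hTi n) (hTS.trans (hSi n))))
      (hlim.comp (tendsto_add_atTop_nat 1))
  have hzero : Tendsto (fun _ : ℕ => d (T w) (S w)) atTop (𝓝 0) :=
    tendsto_zero_of_le_const_mul (fun _ => hd0 _ _)
      (fun n => (le_max_left _ _).trans (hreg _ _ _ hTS (hSi n))) hnear
  exact (hdeq _ _).1 (tendsto_const_nhds_iff.1 hzero)

theorem stmt_11_general {X : Type*} [Preorder X] (d : X → X → ℝ) (s : ℝ)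
    (hd0 : ∀ x y, 0 ≤ d x y) (hdeq : ∀ x y, d x y = 0 ↔ x = y)
    (hreg : ∀ x y z : X, x ≤ y → y ≤ z → max (d x y) (d y z) ≤ s ^ 2 * d x z)
    (T S : X → X) (x₀ : X) (h0 : S x₀ ≤ T x₀)
    (hT : ∀ x y, x ≤ y → T x ≤ T y)
    (hcov : ∀ x, x₀ ≤ x → S x ≤ T x → ∃ y, x ≤ y ∧ S y = T x)
    (hchain : ∀ C : Set X, IsChain (· ≤ ·) C → C ⊆ {x | x₀ ≤ x} →
      (∀ x ∈ C, S x ≤ T x) → (∀ x ∈ C, ∀ y ∈ C, x < y → T x ≤ S y) →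
      S '' C ⊆ T '' {x | x₀ ≤ x} →
      ∃ w, (∀ x ∈ C, x ≤ w) ∧ T w ≤ w ∧
        ∃ z, (∀ i : ℕ, 1 ≤ i → S w ≤ S^[i] z) ∧ T w ≤ S w ∧
          Filter.Tendsto (fun i : ℕ => d (T^[i] w) (S^[i] z))
            Filter.atTop (nhds 0)) :
    ∃ w, T w = S w ∧ x₀ ≤ w ∧
      ∀ u, T u = S u → x₀ ≤ u → ¬ w < u := by
  have hTmono : Monotone T := fun x y h => hT x y h
  obtain ⟨y₀, hy₀, hSy₀⟩ := hcov x₀ le_rfl h0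
  obtain ⟨w₀, hw₀ub, hTw₀, z₀, hSz₀, hTSw₀, hlim₀⟩ :=
    hchain {y₀} IsChain.singleton (by simpa using hy₀) (by simpa [hSy₀] using hT _ _ hy₀)
      (by simp) (by simpa using ⟨x₀, le_rfl, hSy₀.symm⟩)
  have hw₀ : T w₀ = S w₀ :=
    eq_of_tendsto_dist_iterate hd0 hdeq hreg hTmono hTw₀ hTSw₀ hSz₀ hlim₀
  have hub : ∀ C ⊆ {x | T x = S x ∧ x₀ ≤ x}, IsChain (· ≤ ·) C →
      ∀ a ∈ C, ∃ ub ∈ {x | T x = S x ∧ x₀ ≤ x}, ∀ x ∈ C, x ≤ ub := by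
    intro C hC hchainC a ha
    obtain ⟨w, hwub, hTw, z, hSz, hTS, hlim⟩ :=
      hchain C hchainC (fun x hx => (hC hx).2) (fun x hx => (hC hx).1.ge)
        (fun x _ y hy hxy => (hC hy).1 ▸ hT _ _ hxy.le)
        (by rintro _ ⟨x, hx, rfl⟩; exact ⟨x, (hC hx).2, (hC hx).1⟩)
    exact ⟨w, ⟨eq_of_tendsto_dist_iterate hd0 hdeq hreg hTmono hTw hTS hSz hlim,
      (hC ha).2.trans (hwub a ha)⟩, hwub⟩
  obtain ⟨m, -, hm⟩ := zorn_le_nonempty₀ _ hub w₀ ⟨hw₀, hy₀.trans (hw₀ub y₀ rfl)⟩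
  exact ⟨m, hm.prop.1, hm.prop.2, fun u hu hx₀u hmu => hm.not_prop_of_gt hmu ⟨hu, hx₀u⟩⟩

/-- Dual coincidence theorem: Coin(T,S) ∩ O_X*(x₀) is nonempty and contains a
maximal element. -/
theorem stmt_11 {X : Type*} [Preorder X] (d : X → X → ℝ) (s : ℝ) (hs : 1 ≤ s)
    (hd0 : ∀ x y, 0 ≤ d x y) (hdeq : ∀ x y, d x y = 0 ↔ x = y)
    (hdsymm : ∀ x y, d x y = d y x)
    (hdtri : ∀ x y z, d x y ≤ s * (d x z + d z y))
    (hreg : ∀ x y z : X, x ≤ y → y ≤ z → max (d x y) (d y z) ≤ s ^ 2 * d x z)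
    (T S : X → X) (x₀ : X) (h0 : S x₀ ≤ T x₀)
    (hT : ∀ x y, x ≤ y → T x ≤ T y)
    (hcov : ∀ x, x₀ ≤ x → S x ≤ T x → ∃ y, x ≤ y ∧ S y = T x)
    (hchain : ∀ C : Set X, IsChain (· ≤ ·) C → C ⊆ {x | x₀ ≤ x} →
      (∀ x ∈ C, S x ≤ T x) → (∀ x ∈ C, ∀ y ∈ C, x < y → T x ≤ S y) →
      S '' C ⊆ T '' {x | x₀ ≤ x} →
      ∃ w, (∀ x ∈ C, x ≤ w) ∧ T w ≤ w ∧
        ∃ z, (∀ i : ℕ, 1 ≤ i → S w ≤ S^[i] z) ∧ T w ≤ S w ∧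
          Filter.Tendsto (fun i : ℕ => d (T^[i] w) (S^[i] z))
            Filter.atTop (nhds 0)) :
    ∃ w, T w = S w ∧ x₀ ≤ w ∧
      ∀ u, T u = S u → x₀ ≤ u → ¬ w < u :=
  stmt_11_general d s hd0 hdeq hreg T S x₀ h0 hT hcov hchain
end

section
/- Minimality step: In the setting of the coincidence theorem, suppose w ∈ Coin(T,S) ∩ O_X(x₀) is a lower bound of a maximal chain C ⊆ V (with respect to the order ⊑ defined by v₁ ⊑ v₂ iff v₁ = v₂ or (v₁ ≺ v₂ and S(v₁) ≼ T(v₂))), where V = {x ≼ x₀ : T(x) ≼ S(x), S(x) ∈ T(O_X(x₀))}, and T is isotone. Then there is no u ∈ Coin(T,S) ∩ O_X(x₀) with u ≺ w, i.e., w is minimal in Coin(T,S) ∩ O_X(x₀). -/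
theorem stmt_12_general {X : Type*} [Preorder X] (T S : X → X) (x₀ : X)
    (hT : ∀ x y, x ≤ y → T x ≤ T y)
    (sq : X → X → Prop)
    (hsq : ∀ v₁ v₂, sq v₁ v₂ ↔ v₁ = v₂ ∨ (v₁ < v₂ ∧ S v₁ ≤ T v₂))
    (V : Set X)
    (hV : V = {x | x ≤ x₀ ∧ T x ≤ S x ∧ S x ∈ T '' {y | y ≤ x₀}})
    (C : Set X)
    (hCmax : ∀ u ∈ V, (∀ x ∈ C, sq u x ∨ sq x u) → u ∈ C)
    (w : X) (hlb : ∀ x ∈ C, w ≤ x) :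
    ∀ u, T u = S u → u ≤ x₀ → ¬ u < w := by
  intro u hu hux₀ huw
  have huV : u ∈ V := hV ▸ ⟨hux₀, hu.le, u, hux₀, hu⟩
  -- `S u = T u ≤ T x` by isotonicity of `T`.
  have hu_below : ∀ x ∈ C, sq u x := fun x hx =>
    have hux : u < x := huw.trans_le (hlb x hx)
    (hsq u x).2 (Or.inr ⟨hux, hu ▸ hT u x hux.le⟩)
  have huC : u ∈ C := hCmax u huV fun x hx => Or.inl (hu_below x hx)
  exact (hlb u huC).not_gt huw

/-- Minimality step: if w ∈ Coin(T,S) ∩ O_X(x₀) is a lower bound of a maximal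
chain C in (V,⊑) and T is isotone, then w is minimal in Coin(T,S) ∩ O_X(x₀). -/
theorem stmt_12 {X : Type*} [Preorder X] (T S : X → X) (x₀ : X)
    (hT : ∀ x y, x ≤ y → T x ≤ T y)
    (sq : X → X → Prop)
    (hsq : ∀ v₁ v₂, sq v₁ v₂ ↔ v₁ = v₂ ∨ (v₁ < v₂ ∧ S v₁ ≤ T v₂))
    (V : Set X)
    (hV : V = {x | x ≤ x₀ ∧ T x ≤ S x ∧ S x ∈ T '' {y | y ≤ x₀}})
    (C : Set X) (hCV : C ⊆ V) (hCchain : IsChain sq C)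
    (hCmax : ∀ u ∈ V, (∀ x ∈ C, sq u x ∨ sq x u) → u ∈ C)
    (w : X) (hw : T w = S w) (hwx₀ : w ≤ x₀) (hlb : ∀ x ∈ C, w ≤ x) :
    ∀ u, T u = S u → u ≤ x₀ → ¬ u < w :=
  stmt_12_general T S x₀ hT sq hsq V hV C hCmax w hlb
end

section
/- Order homotopy transfer step: Let (X, d, ≼) be a preordered s-regular b-metric space, and H₀, H₁, K₀, K₁ : X → X with H₀ ≼ H₁ pointwise and K₁ ≼ K₀ pointwise. If x₀ ∈ Coin(H₀, K₀), then K₁(x₀) ≼ H₁(x₀). Consequently, if moreover K₁ is isotone, H₁ covers K₁ on O_X(x₀), and every chain C ∈ 𝒞(x₀, K₁, H₁, ≼) has a lower bound w with w ≼ K₁(w) together with z ∈ X satisfying H₁ⁱ(z) ≼ H₁(w) ≼ K₁(w) for all i and d(K₁ⁱ(w), H₁ⁱ(z)) → 0, then Coin(H₁, K₁) ∩ O_X(x₀) is nonempty with a minimal element. -/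
/-!
The transfer step is the chain `K₁ x₀ ≤ K₀ x₀ = H₀ x₀ ≤ H₁ x₀`. For the consequence, the lower
bound `w` provided for an admissible chain is a coincidence point of `H₁` and `K₁`: from
`H₁ⁱ z ≤ H₁ w ≤ K₁ w ≤ K₁ⁱ w` two applications of s-regularity give
`d (H₁ w) (K₁ w) ≤ s⁴ d (K₁ⁱ w) (H₁ⁱ z) → 0`. Chains of coincidence points below `x₀` are
admissible because `K₁` is isotone, so Zorn's lemma yields a minimal coincidence point; the set
is nonempty because the covering at `x₀` gives `x₁ ≤ x₀` with `H₁ x₁ = K₁ x₀`, and `{x₁}` is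
admissible.
-/

open Filter Topology

/-- The chain set `𝒞(x₀, T, S, ≼)` of the coincidence theorem. -/
def IsAdmissibleChain_s14 {X : Type*} [Preorder X] (x₀ : X) (T S : X → X) (C : Set X) : Prop :=
  IsChain (· ≤ ·) C ∧ C ⊆ {x | x ≤ x₀} ∧ (∀ x ∈ C, T x ≤ S x) ∧
    (∀ x ∈ C, ∀ y ∈ C, x < y → S x ≤ T y) ∧ S '' C ⊆ T '' {x | x ≤ x₀}

theorem exists_minimal_of_chains_bddBelow {α : Type*} [Preorder α] {s : Set α}
    (h : ∀ c ⊆ s, IsChain (· ≤ ·) c → c.Nonempty → ∃ lb ∈ s, ∀ z ∈ c, lb ≤ z)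
    (hs : s.Nonempty) : ∃ m, Minimal (· ∈ s) m := by
  obtain ⟨x, hx⟩ := hs
  obtain ⟨m, -, hm⟩ := zorn_le_nonempty₀ (α := αᵒᵈ) s
    (fun c hcs hc y hy => h c hcs hc.symm ⟨y, hy⟩) x hx
  exact ⟨m, hm⟩

section AdmissibleChain

variable {X : Type*} [Preorder X] {x₀ : X} {T S : X → X}

theorem isAdmissibleChain_of_subset_coincidence (hT : Monotone T) {C : Set X}
    (hC : IsChain (· ≤ ·) C) (hCcoin : C ⊆ {x | S x = T x ∧ x ≤ x₀}) :
    IsAdmissibleChain_s14 x₀ T S C := by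
  refine ⟨hC, fun x hx => (hCcoin hx).2, fun x hx => (hCcoin hx).1.ge, ?_, ?_⟩
  · intro x hx y _ hxy
    rw [(hCcoin hx).1]
    exact hT hxy.le
  · rintro _ ⟨x, hx, rfl⟩
    exact ⟨x, (hCcoin hx).2, (hCcoin hx).1.symm⟩

theorem isAdmissibleChain_singleton_s14 {x : X} (hx : x ≤ x₀) (hTS : T x ≤ S x)
    (hS : S x ∈ T '' {x | x ≤ x₀}) : IsAdmissibleChain_s14 x₀ T S {x} := by
  refine ⟨Set.subsingleton_singleton.isChain, by simpa using hx, by simpa using hTS, ?_,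
    by simpa using hS⟩
  intro a ha b hb hab
  exact absurd (Set.subsingleton_singleton ha hb) hab.ne

end AdmissibleChain

section RegularBMetric

variable {X : Type*} [Preorder X] {d : X → X → ℝ} {s : ℝ}

theorem eq_of_squeeze_of_tendsto (hd0 : ∀ x y, 0 ≤ d x y) (hdeq : ∀ x y, d x y = 0 ↔ x = y)
    (hdsymm : ∀ x y, d x y = d y x)
    (hreg : ∀ x y z : X, x ≤ y → y ≤ z → max (d x y) (d y z) ≤ s ^ 2 * d x z)
    {p q : X} {u v : ℕ → X} (hpq : p ≤ q) (hu : ∀ᶠ i in atTop, u i ≤ p)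
    (hv : ∀ᶠ i in atTop, q ≤ v i) (huv : Tendsto (fun i => d (v i) (u i)) atTop (𝓝 0)) :
    p = q := by
  have hbound : ∀ i, u i ≤ p → q ≤ v i → d p q ≤ s ^ 2 * (s ^ 2 * d (v i) (u i)) := by
    intro i hup hqv
    calc d p q ≤ s ^ 2 * d p (v i) := (le_max_left _ _).trans (hreg p q (v i) hpq hqv)
      _ ≤ s ^ 2 * (s ^ 2 * d (v i) (u i)) := by
        gcongr
        rw [hdsymm (v i)]
        exact (le_max_right _ _).trans (hreg (u i) p (v i) hup (hpq.trans hqv))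
  have hlim : Tendsto (fun i => s ^ 2 * (s ^ 2 * d (v i) (u i))) atTop (𝓝 0) := by
    simpa using (huv.const_mul (s ^ 2)).const_mul (s ^ 2)
  have hle : d p q ≤ 0 :=
    ge_of_tendsto hlim ((hu.and hv).mono fun i hi => hbound i hi.1 hi.2)
  exact (hdeq p q).mp (hle.antisymm (hd0 p q))

theorem eq_of_iterate_squeeze (hd0 : ∀ x y, 0 ≤ d x y) (hdeq : ∀ x y, d x y = 0 ↔ x = y)
    (hdsymm : ∀ x y, d x y = d y x)
    (hreg : ∀ x y z : X, x ≤ y → y ≤ z → max (d x y) (d y z) ≤ s ^ 2 * d x z)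
    {H K : X → X} (hK : Monotone K) {w z : X} (hwK : w ≤ K w)
    (hHz : ∀ i : ℕ, 1 ≤ i → H^[i] z ≤ H w) (hHK : H w ≤ K w)
    (hlim : Tendsto (fun i : ℕ => d (K^[i] w) (H^[i] z)) atTop (𝓝 0)) :
    H w = K w := by
  have hKiter : ∀ i : ℕ, 1 ≤ i → K w ≤ K^[i] w := fun i hi =>
    hK.monotone_iterate_of_le_map hwK hi
  exact eq_of_squeeze_of_tendsto hd0 hdeq hdsymm hreg hHK (eventually_atTop.2 ⟨1, hHz⟩)
    (eventually_atTop.2 ⟨1, hKiter⟩) hlim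

end RegularBMetric

theorem stmt_14_general {X : Type*} [Preorder X] (d : X → X → ℝ) (s : ℝ)
    (hd0 : ∀ x y, 0 ≤ d x y) (hdeq : ∀ x y, d x y = 0 ↔ x = y)
    (hdsymm : ∀ x y, d x y = d y x)
    (hreg : ∀ x y z : X, x ≤ y → y ≤ z → max (d x y) (d y z) ≤ s ^ 2 * d x z)
    (H₀ H₁ K₀ K₁ : X → X)
    (hH : ∀ x, H₀ x ≤ H₁ x) (hK : ∀ x, K₁ x ≤ K₀ x)
    (x₀ : X) (hx₀ : H₀ x₀ = K₀ x₀) :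
    K₁ x₀ ≤ H₁ x₀ ∧
      ((∀ x y, x ≤ y → K₁ x ≤ K₁ y) →
        (∀ x, x ≤ x₀ → K₁ x ≤ H₁ x → ∃ y, y ≤ x ∧ H₁ y = K₁ x) →
        (∀ C : Set X, IsChain (· ≤ ·) C → C ⊆ {x | x ≤ x₀} →
          (∀ x ∈ C, K₁ x ≤ H₁ x) → (∀ x ∈ C, ∀ y ∈ C, x < y → H₁ x ≤ K₁ y) →
          H₁ '' C ⊆ K₁ '' {x | x ≤ x₀} →
          ∃ w, (∀ x ∈ C, w ≤ x) ∧ w ≤ K₁ w ∧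
            ∃ z, (∀ i : ℕ, 1 ≤ i → H₁^[i] z ≤ H₁ w) ∧ H₁ w ≤ K₁ w ∧
              Filter.Tendsto (fun i : ℕ => d (K₁^[i] w) (H₁^[i] z))
                Filter.atTop (nhds 0)) →
        ∃ w, H₁ w = K₁ w ∧ w ≤ x₀ ∧
          ∀ u, H₁ u = K₁ u → u ≤ x₀ → ¬ u < w) := by
  have hKH : K₁ x₀ ≤ H₁ x₀ := (hK x₀).trans (hx₀ ▸ hH x₀)
  refine ⟨hKH, fun hmono hcov hchain => ?_⟩
  have hlower : ∀ C, IsAdmissibleChain_s14 x₀ K₁ H₁ C → ∃ w, (∀ x ∈ C, w ≤ x) ∧ H₁ w = K₁ w := by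
    rintro C ⟨hC, hCx₀, hCKH, hCHK, hCcov⟩
    obtain ⟨w, hwC, hwK, z, hHz, hHKw, hlim⟩ := hchain C hC hCx₀ hCKH hCHK hCcov
    exact ⟨w, hwC, eq_of_iterate_squeeze hd0 hdeq hdsymm hreg hmono hwK hHz hHKw hlim⟩
  set A := {x | H₁ x = K₁ x ∧ x ≤ x₀}
  have hA : A.Nonempty := by
    obtain ⟨x₁, hx₁, hHx₁⟩ := hcov x₀ le_rfl hKH
    obtain ⟨w, hw, hwcoin⟩ := hlower {x₁} (isAdmissibleChain_singleton_s14 hx₁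
      (hHx₁ ▸ hmono _ _ hx₁) ⟨x₀, le_rfl, hHx₁.symm⟩)
    exact ⟨w, hwcoin, (hw x₁ rfl).trans hx₁⟩
  obtain ⟨m, ⟨hmcoin, hmx₀⟩, hmin⟩ := exists_minimal_of_chains_bddBelow (s := A)
    (fun c hcA hc ⟨y, hy⟩ => by
      obtain ⟨w, hw, hwcoin⟩ := hlower c (isAdmissibleChain_of_subset_coincidence hmono hc hcA)
      exact ⟨w, ⟨hwcoin, (hw y hy).trans (hcA hy).2⟩, hw⟩) hA
  exact ⟨m, hmcoin, hmx₀, fun u hu hux₀ hlt => hlt.not_ge (hmin ⟨hu, hux₀⟩ hlt.le)⟩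

/-- Order homotopy transfer step: if H₀ ≼ H₁ and K₁ ≼ K₀ pointwise and
x₀ ∈ Coin(H₀,K₀), then K₁(x₀) ≼ H₁(x₀); consequently, under the covering and
chain conditions, Coin(H₁,K₁) ∩ O_X(x₀) is nonempty with a minimal element. -/
theorem stmt_14 {X : Type*} [Preorder X] (d : X → X → ℝ) (s : ℝ) (hs : 1 ≤ s)
    (hd0 : ∀ x y, 0 ≤ d x y) (hdeq : ∀ x y, d x y = 0 ↔ x = y)
    (hdsymm : ∀ x y, d x y = d y x)
    (hdtri : ∀ x y z, d x y ≤ s * (d x z + d z y))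
    (hreg : ∀ x y z : X, x ≤ y → y ≤ z → max (d x y) (d y z) ≤ s ^ 2 * d x z)
    (H₀ H₁ K₀ K₁ : X → X)
    (hH : ∀ x, H₀ x ≤ H₁ x) (hK : ∀ x, K₁ x ≤ K₀ x)
    (x₀ : X) (hx₀ : H₀ x₀ = K₀ x₀) :
    K₁ x₀ ≤ H₁ x₀ ∧
      ((∀ x y, x ≤ y → K₁ x ≤ K₁ y) →
        (∀ x, x ≤ x₀ → K₁ x ≤ H₁ x → ∃ y, y ≤ x ∧ H₁ y = K₁ x) →
        (∀ C : Set X, IsChain (· ≤ ·) C → C ⊆ {x | x ≤ x₀} →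
          (∀ x ∈ C, K₁ x ≤ H₁ x) → (∀ x ∈ C, ∀ y ∈ C, x < y → H₁ x ≤ K₁ y) →
          H₁ '' C ⊆ K₁ '' {x | x ≤ x₀} →
          ∃ w, (∀ x ∈ C, w ≤ x) ∧ w ≤ K₁ w ∧
            ∃ z, (∀ i : ℕ, 1 ≤ i → H₁^[i] z ≤ H₁ w) ∧ H₁ w ≤ K₁ w ∧
              Filter.Tendsto (fun i : ℕ => d (K₁^[i] w) (H₁^[i] z))
                Filter.atTop (nhds 0)) →
        ∃ w, H₁ w = K₁ w ∧ w ≤ x₀ ∧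
          ∀ u, H₁ u = K₁ u → u ≤ x₀ → ¬ u < w) :=
  stmt_14_general d s hd0 hdeq hdsymm hreg H₀ H₁ K₀ K₁ hH hK x₀ hx₀
end

section
/- Common fixed point limit step: Let (X, d, ≼) be a preordered s-regular b-metric space and ℱ = {f_α}_{α∈I} a family of self-maps with w ∈ X such that f_α(w) ≼ w and f_αⁱ(w) ≼ f_α(w) for all i ∈ ℕ and all α. If there exist z ∈ X and β ∈ I with f_α(w) ≼ w ≼ f_βⁱ(z) for all i, and d(f_αⁱ(w), f_βⁱ(z)) → 0 as i → ∞, then f_α(w) = w, and the key estimate d(f_α(w), w) ≤ 2s³·d(f_αⁱ(w), f_βⁱ(z)) holds for all i. -/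
/-!
Along the chain `f_αⁱ(w) ≼ f_α(w) ≼ w ≼ f_βⁱ(z)`, regularity bounds the distances from `f_α(w)`
and from `w` to `f_βⁱ(z)` by `s²·d(f_αⁱ(w), f_βⁱ(z))`, and the relaxed triangle inequality through
`f_βⁱ(z)` gives the estimate. Its right-hand side tends to `0`, so `d(f_α(w), w) = 0`.
-/

theorem dist_le_two_mul_pow_three_of_between {X : Type*} [Preorder X] (d : X → X → ℝ)
    {s : ℝ} (hs : 0 ≤ s) (hdsymm : ∀ x y, d x y = d y x)
    (hdtri : ∀ x y z, d x y ≤ s * (d x z + d z y))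
    (hreg : ∀ x y z : X, x ≤ y → y ≤ z → max (d x y) (d y z) ≤ s ^ 2 * d x z)
    {a x y v : X} (hax : a ≤ x) (hxv : x ≤ v) (hay : a ≤ y) (hyv : y ≤ v) :
    d x y ≤ 2 * s ^ 3 * d a v := by
  have hx : d x v ≤ s ^ 2 * d a v := (le_max_right _ _).trans (hreg a x v hax hxv)
  have hy : d y v ≤ s ^ 2 * d a v := (le_max_right _ _).trans (hreg a y v hay hyv)
  calc d x y ≤ s * (d x v + d v y) := hdtri x y v
    _ ≤ s * (s ^ 2 * d a v + s ^ 2 * d a v) := by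
      rw [hdsymm v y]
      gcongr
    _ = 2 * s ^ 3 * d a v := by ring

theorem nonpos_of_le_const_mul_of_tendsto_zero {c C : ℝ} {u : ℕ → ℝ}
    (hle : ∀ᶠ i in Filter.atTop, c ≤ C * u i) (hu : Filter.Tendsto u Filter.atTop (nhds 0)) :
    c ≤ 0 := by
  have hCu : Filter.Tendsto (fun i => C * u i) Filter.atTop (nhds 0) := by
    simpa using hu.const_mul C
  exact le_of_tendsto_of_tendsto tendsto_const_nhds hCu hle

/-- Common fixed point limit step: under f_α(w) ≼ w, f_αⁱ(w) ≼ f_α(w),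
w ≼ f_βⁱ(z) and d(f_αⁱ(w), f_βⁱ(z)) → 0, we get f_α(w) = w and the estimate
d(f_α(w), w) ≤ 2s³·d(f_αⁱ(w), f_βⁱ(z)). -/
theorem stmt_16 {X : Type*} [Preorder X] {I : Type*} (d : X → X → ℝ)
    (s : ℝ) (hs : 1 ≤ s)
    (hd0 : ∀ x y, 0 ≤ d x y) (hdeq : ∀ x y, d x y = 0 ↔ x = y)
    (hdsymm : ∀ x y, d x y = d y x)
    (hdtri : ∀ x y z, d x y ≤ s * (d x z + d z y))
    (hreg : ∀ x y z : X, x ≤ y → y ≤ z → max (d x y) (d y z) ≤ s ^ 2 * d x z)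
    (f : I → X → X) (w z : X) (β : I)
    (hw : ∀ α, f α w ≤ w)
    (hiter : ∀ (α : I) (i : ℕ), 1 ≤ i → (f α)^[i] w ≤ f α w)
    (hz : ∀ i : ℕ, 1 ≤ i → w ≤ (f β)^[i] z)
    (hlim : ∀ α : I, Filter.Tendsto (fun i : ℕ => d ((f α)^[i] w) ((f β)^[i] z))
      Filter.atTop (nhds 0)) :
    (∀ α, f α w = w) ∧
      ∀ (α : I) (i : ℕ), 1 ≤ i →
        d (f α w) w ≤ 2 * s ^ 3 * d ((f α)^[i] w) ((f β)^[i] z) := by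
  have estimate : ∀ (α : I) (i : ℕ), 1 ≤ i →
      d (f α w) w ≤ 2 * s ^ 3 * d ((f α)^[i] w) ((f β)^[i] z) := fun α i hi =>
    dist_le_two_mul_pow_three_of_between d (zero_le_one.trans hs) hdsymm hdtri hreg
      (hiter α i hi) ((hw α).trans (hz i hi)) ((hiter α i hi).trans (hw α)) (hz i hi)
  refine ⟨fun α => (hdeq _ _).mp (le_antisymm ?_ (hd0 _ _)), estimate⟩
  exact nonpos_of_le_const_mul_of_tendsto_zero
    (Filter.eventually_atTop.mpr ⟨1, estimate α⟩) (hlim α)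
end
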